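/- Let A be a positive bounded operator on a Hilbert space H and S a closed subspace. Then R((A − [S]A)^{1/2}) ∩ S = {0}; in particular, the closure of R([S]A) intersects R(A − [S]A) trivially. -/

import Mathlib

/-!
Put `B = (1 - P_M) A^{1/2}`. Then `B† B = A - [S]A = D²` for `D = (A - [S]A)^{1/2}`, so `‖D u‖ = ‖B u‖`,
and Douglas' range inclusion gives `R(D) ⊆ R(B†) = A^{1/2}(M^⊥)`. But `A^{1/2} w ∈ S` means `w ∈ M`,
so `R(D) ∩ S = {0}`. The second claim follows from `closure R([S]A) ⊆ S` and `R(A - [S]A) ⊆ R(D)`.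
-/

open ContinuousLinearMap

/-- `P` is the orthogonal projection onto the closed subspace `S`: a selfadjoint
idempotent with range `S`. -/
def IsOrthoProj {E : Type*} [NormedAddCommGroup E] [InnerProductSpace ℂ E] [CompleteSpace E]
    (P : E →L[ℂ] E) (S : Submodule ℂ E) : Prop :=
  IsIdempotentElem P ∧ IsSelfAdjoint P ∧ LinearMap.range (P : E →ₗ[ℂ] E) = S

variable {H : Type*} [NormedAddCommGroup H] [InnerProductSpace ℂ H] [CompleteSpace H]

section Factorization

variable {𝕜 E G : Type*} [RCLike 𝕜] [NormedAddCommGroup E] [NormedSpace 𝕜 E]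
  [NormedAddCommGroup G] [NormedSpace 𝕜 G]

theorem ContinuousLinearMap.exists_comp_eq_of_norm_le (ℓ : StrongDual 𝕜 E) (B : E →L[𝕜] G)
    (C : ℝ) (h : ∀ u, ‖ℓ u‖ ≤ C * ‖B u‖) : ∃ g : StrongDual 𝕜 G, g ∘L B = ℓ := by
  let B' : E →ₗ[𝕜] G := B
  have hker : LinearMap.ker B' ≤ LinearMap.ker (ℓ : E →ₗ[𝕜] 𝕜) := fun u hu => by
    simpa [show B u = 0 from hu] using h u
  let φ : LinearMap.range B' →ₗ[𝕜] 𝕜 :=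
    (LinearMap.ker B').liftQ ℓ hker ∘ₗ B'.quotKerEquivRange.symm.toLinearMap
  have hφ : ∀ u, φ ⟨B' u, B'.mem_range_self u⟩ = ℓ u := fun u => by
    simp [φ, LinearMap.quotKerEquivRange_symm_apply_image]
  have hφC : ∀ k, ‖φ k‖ ≤ C * ‖k‖ := by
    rintro ⟨_, u, rfl⟩
    exact (hφ u).symm ▸ h u
  obtain ⟨g, hg, -⟩ := exists_extension_norm_eq _ (φ.mkContinuous C hφC)
  exact ⟨g, ContinuousLinearMap.ext fun u => (hg ⟨B' u, B'.mem_range_self u⟩).trans (hφ u)⟩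

end Factorization

section Adjoint

variable {𝕜 E F G : Type*} [RCLike 𝕜]
  [NormedAddCommGroup E] [InnerProductSpace 𝕜 E] [CompleteSpace E]
  [NormedAddCommGroup F] [InnerProductSpace 𝕜 F] [CompleteSpace F]
  [NormedAddCommGroup G] [InnerProductSpace 𝕜 G] [CompleteSpace G]

/-- Douglas: `⟪T† y, ·⟫` factors through `B`, and the Riesz representative `z` of the factor
satisfies `B† z = T† y`. -/
theorem ContinuousLinearMap.range_adjoint_le_of_norm_le (T : E →L[𝕜] F) (B : E →L[𝕜] G) (C : ℝ)
    (h : ∀ u, ‖T u‖ ≤ C * ‖B u‖) :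
    LinearMap.range (adjoint T : F →ₗ[𝕜] E) ≤ LinearMap.range (adjoint B : G →ₗ[𝕜] E) := by
  rintro _ ⟨y, rfl⟩
  have hbound : ∀ u, ‖innerSL 𝕜 (adjoint T y) u‖ ≤ ‖y‖ * C * ‖B u‖ := fun u => by
    rw [innerSL_apply_apply, adjoint_inner_left, mul_assoc]
    exact (norm_inner_le_norm _ _).trans (by gcongr; exact h u)
  obtain ⟨g, hg⟩ := exists_comp_eq_of_norm_le _ B _ hbound
  refine ⟨(InnerProductSpace.toDual 𝕜 G).symm g, ext_inner_right 𝕜 fun u => ?_⟩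
  rw [coe_coe, coe_coe, adjoint_inner_left, InnerProductSpace.toDual_symm_apply]
  simpa using congr($hg u)

theorem ContinuousLinearMap.norm_apply_eq_of_adjoint_comp_self_eq {T : E →L[𝕜] F}
    {B : E →L[𝕜] G} (h : adjoint T ∘L T = adjoint B ∘L B) (u : E) : ‖T u‖ = ‖B u‖ := by
  have := apply_norm_sq_eq_inner_adjoint_left T u
  rw [h, ← apply_norm_sq_eq_inner_adjoint_left] at this
  exact (sq_eq_sq₀ (norm_nonneg _) (norm_nonneg _)).mp this

end Adjoint

theorem ContinuousLinearMap.range_comp_one_sub_inf_eq_bot {𝕜 E : Type*} [RCLike 𝕜]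
    [NormedAddCommGroup E] [NormedSpace 𝕜 E] {P : E →L[𝕜] E} (hP : IsIdempotentElem P)
    (T : E →L[𝕜] E) {S : Submodule 𝕜 E}
    (hPS : LinearMap.range (P : E →ₗ[𝕜] E) = S.comap (T : E →ₗ[𝕜] E)) :
    LinearMap.range ((T ∘L (1 - P) : E →L[𝕜] E) : E →ₗ[𝕜] E) ⊓ S = ⊥ := by
  rw [eq_bot_iff]
  rintro _ ⟨⟨z, rfl⟩, hzS⟩
  have hPP : ∀ v, P (P v) = P v := fun v => congr($hP.eq v)
  obtain ⟨t, ht⟩ : (1 - P) z ∈ LinearMap.range (P : E →ₗ[𝕜] E) := by rw [hPS]; exact hzS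
  rw [coe_coe] at ht
  have hz : (1 - P) z = 0 := calc
    (1 - P) z = P (P t) := by rw [hPP, ht]
    _ = 0 := by simp [ht, hPP]
  rw [Submodule.mem_bot, coe_coe, comp_apply, hz, map_zero]

/-- `[S]A` is encoded as `sA ∘L PM ∘L sA`, with `sA = A^{1/2}` and `PM` the orthogonal projection
onto `M = (A^{1/2})⁻¹(S)`; `sD = (A - [S]A)^{1/2}`. -/
theorem shorted_complement_disjoint (A sA : H →L[ℂ] H)
    (hsA : sA.IsPositive) (hsA2 : sA ∘L sA = A)
    (S : Submodule ℂ H) (hS : IsClosed (S : Set H))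
    (PM : H →L[ℂ] H) (hPM : IsOrthoProj PM (Submodule.comap (sA : H →ₗ[ℂ] H) S))
    (sD : H →L[ℂ] H) (hsD : sD.IsPositive) (hsD2 : sD ∘L sD = A - sA ∘L PM ∘L sA) :
    LinearMap.range (sD : H →ₗ[ℂ] H) ⊓ S = ⊥ ∧
    (LinearMap.range ((sA ∘L PM ∘L sA : H →L[ℂ] H) : H →ₗ[ℂ] H)).topologicalClosure ⊓
      LinearMap.range ((A - sA ∘L PM ∘L sA : H →L[ℂ] H) : H →ₗ[ℂ] H) = ⊥ := by
  obtain ⟨hPi, hPsa, hPr⟩ := hPM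
  have hQ : IsStarProjection (1 - PM) := IsStarProjection.one_sub ⟨hPi, hPsa⟩
  have hB : adjoint ((1 - PM) ∘L sA) = sA ∘L (1 - PM) := by
    rw [adjoint_comp, hsA.isSelfAdjoint.adjoint_eq, hQ.isSelfAdjoint.adjoint_eq]
  have hBB : adjoint sD ∘L sD = adjoint ((1 - PM) ∘L sA) ∘L ((1 - PM) ∘L sA) := by
    rw [hB, hsD.isSelfAdjoint.adjoint_eq, hsD2, ← hsA2]
    change sA * sA - sA * (PM * sA) = sA * (1 - PM) * ((1 - PM) * sA)
    rw [← mul_assoc (sA * (1 - PM)), mul_assoc sA, hQ.isIdempotentElem.eq]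
    noncomm_ring
  have hrange : LinearMap.range (sD : H →ₗ[ℂ] H) ≤
      LinearMap.range ((sA ∘L (1 - PM) : H →L[ℂ] H) : H →ₗ[ℂ] H) := by
    simpa only [hsD.isSelfAdjoint.adjoint_eq, hB] using range_adjoint_le_of_norm_le sD _ 1
      fun u => (norm_apply_eq_of_adjoint_comp_self_eq hBB u).le.trans_eq (one_mul _).symm
  have hdisj : LinearMap.range (sD : H →ₗ[ℂ] H) ⊓ S = ⊥ :=
    eq_bot_iff.2 ((inf_le_inf_right S hrange).trans (range_comp_one_sub_inf_eq_bot hPi sA hPr).le)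
  have hcl : (LinearMap.range ((sA ∘L PM ∘L sA : H →L[ℂ] H) : H →ₗ[ℂ] H)).topologicalClosure ≤ S :=
    Submodule.topologicalClosure_minimal _ (by rintro _ ⟨u, rfl⟩; exact hPr.le ⟨sA u, rfl⟩) hS
  have hsD_le : LinearMap.range ((A - sA ∘L PM ∘L sA : H →L[ℂ] H) : H →ₗ[ℂ] H) ≤
      LinearMap.range (sD : H →ₗ[ℂ] H) := by
    rw [← hsD2]
    exact LinearMap.range_comp_le_range _ _
  refine ⟨hdisj, eq_bot_iff.2 ?_⟩
  calc _ ≤ S ⊓ LinearMap.range (sD : H →ₗ[ℂ] H) := inf_le_inf hcl hsD_le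
    _ = ⊥ := inf_comm S _ ▸ hdisj
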